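/- Let p be a prime, for each prime divisor q of p−1 let 𝐠_p(q) be the least positive integer that is a q-th power non-residue mod p, let g₁ < g₂ < … < g_s be the distinct values taken by 𝐠_p(q) as q ranges over the prime divisors of p−1, and let A_i = {q prime : q | p−1, 𝐠_p(q) = g_i}. Then there exist integers m₁, …, m_s with 0 ≤ m_i ≤ j(∏_{q ∈ A_i} q) − 1 for each i and m_s = 1 such that the residue class of ∏_{i=1}^{s} g_i^{m_i} modulo p is a q-th power non-residue for every prime divisor q of p−1. -/

import Mathlib

/-!
For each prime `q ∣ p - 1` the units of `ZMod p` form a cyclic group, so there is a character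
`χ_q : (ZMod p)ˣ → ZMod q` whose kernel is exactly the `q`-th powers. Hence `∏ g ^ m g` is a
`q`-th power non-residue iff `∑ m g • χ_q g ≠ 0` in `ZMod q`. For `q ∈ A_i` we have
`χ_q g_i ≠ 0`, while `χ_q g_j = 0` for `j < i` because every positive integer below `𝐠_p(q)`
is a `q`-th power residue. The system is therefore triangular: take `m_s = 1` and then choose
`m_{s-1}, …, m_1` in turn. The exponent `m_i` has to avoid one residue class modulo each
`q ∈ A_i`; by the Chinese remainder theorem these classes are a common translate of `0`, so a
window of `j(∏ A_i)` consecutive integers starting at `0` contains an admissible `m_i`.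
-/

/-- The Jacobsthal function: the least positive `m` such that among any `m`
consecutive integers there is one coprime to `n`. -/
noncomputable def jacobsthal (n : ℕ) : ℕ :=
  sInf {m : ℕ | 0 < m ∧ ∀ b : ℤ, ∃ k : ℤ, b < k ∧ k ≤ b + m ∧ IsCoprime k (n : ℤ)}

/-- The least positive integer whose residue class mod `p` is not a `d`-th power
residue, i.e. is not of the form `x ^ d` for a unit `x` of `ZMod p`. -/
noncomputable def leastDPowNonRes (p d : ℕ) : ℕ :=
  sInf {n : ℕ | 0 < n ∧ ¬ ∃ x : (ZMod p)ˣ, ((x : ZMod p)) ^ d = (n : ZMod p)}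

/-- `G p` is the (finite) set of distinct values `g₁ < g₂ < ⋯ < g_s` taken by
`q ↦ 𝐠_p(q)` as `q` ranges over the prime divisors of `p - 1`. -/
noncomputable def resValues (p : ℕ) : Finset ℕ :=
  (p - 1).primeFactors.image (leastDPowNonRes p)

/-- `A_i`: the set of prime divisors `q` of `p - 1` with `𝐠_p(q) = g`. -/
noncomputable def resClass (p g : ℕ) : Finset ℕ :=
  (p - 1).primeFactors.filter (fun q => leastDPowNonRes p q = g)

theorem jacobsthal_spec {n : ℕ} (hn : n ≠ 0) :
    0 < jacobsthal n ∧ ∀ b : ℤ, ∃ k : ℤ, b < k ∧ k ≤ b + jacobsthal n ∧ IsCoprime k (n : ℤ) := by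
  refine Nat.sInf_mem
    (s := {m : ℕ | 0 < m ∧ ∀ b : ℤ, ∃ k : ℤ, b < k ∧ k ≤ b + m ∧ IsCoprime k (n : ℤ)})
    ⟨n, Nat.pos_of_ne_zero hn, fun b => ?_⟩
  have hn' : (0 : ℤ) < n := by exact_mod_cast Nat.pos_of_ne_zero hn
  have hdiv := Int.emod_add_mul_ediv (b - 1) n
  have hlo := Int.emod_nonneg (b - 1) hn'.ne'
  have hhi := Int.emod_lt_of_pos (b - 1) hn'
  -- the least integer above `b` that is `≡ 1 (mod n)`
  refine ⟨1 + n * ((b - 1) / n + 1), by linarith, by linarith, ?_⟩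
  exact (isCoprime_one_left (x := (n : ℤ))).add_mul_left_left _

theorem one_lt_jacobsthal {n : ℕ} (hn : 2 ≤ n) : 1 < jacobsthal n := by
  obtain ⟨hpos, hspec⟩ := jacobsthal_spec (n := n) (by omega)
  by_contra! h
  obtain ⟨k, hk₁, hk₂, hk⟩ := hspec (n - 1)
  obtain rfl : k = n := by omega
  rw [isCoprime_self, Int.isUnit_iff] at hk
  omega

theorem exists_lt_jacobsthal_forall_natCast_ne (A : Finset ℕ) (hA : ∀ q ∈ A, q.Prime)
    (c : (q : ℕ) → ZMod q) :
    ∃ m < jacobsthal (∏ q ∈ A, q), ∀ q ∈ A, (m : ZMod q) ≠ c q := by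
  have hcop : Set.Pairwise A (Function.onFun Nat.Coprime id) := fun q hq r hr hqr =>
    (Nat.coprime_primes (hA q hq) (hA r hr)).2 hqr
  -- `m = k + T` with `T ≡ c q` for all `q ∈ A` and `k` coprime to `∏ A` in a window of length `j`
  obtain ⟨T, hT⟩ := Nat.chineseRemainderOfFinset (fun q => (c q).val) id A
    (fun q hq => (hA q hq).ne_zero) hcop
  obtain ⟨k, hk₁, hk₂, hk⟩ :=
    (jacobsthal_spec (Finset.prod_ne_zero_iff.2 fun q hq => (hA q hq).ne_zero)).2 (-T - 1)
  refine ⟨(k + T).toNat, by omega, fun q hq hmq => ?_⟩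
  have := Fact.mk (hA q hq)
  have hTq : (T : ZMod q) = c q := by
    rw [← ZMod.natCast_zmod_val (c q), ZMod.natCast_eq_natCast_iff]
    exact hT q hq
  have hkq : (k : ZMod q) = 0 := by
    rwa [← Int.cast_natCast, Int.toNat_of_nonneg (by omega), Int.cast_add, Int.cast_natCast, hTq,
      add_eq_right] at hmq
  have hprod : ((∏ q ∈ A, q : ℕ) : ZMod q) = 0 :=
    (ZMod.natCast_eq_zero_iff _ _).2 (Finset.dvd_prod_of_mem _ hq)
  have := hk.map (Int.castRingHom (ZMod q))
  simp only [eq_intCast, Int.cast_natCast, hprod, hkq, isCoprime_zero_right] at this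
  exact not_isUnit_zero this

section PowerResidues

variable {G : Type*} [CommGroup G] [IsCyclic G] [Finite G] {q : ℕ}

theorem IsCyclic.index_powMonoidHom_range_of_dvd (hq : q ∣ Nat.card G) :
    (powMonoidHom q : G →* G).range.index = q := by
  rw [IsCyclic.index_powMonoidHom_range, Nat.gcd_eq_right hq]

theorem IsCyclic.powMonoidHom_range_ne_top (hq : q ∣ Nat.card G) (hq1 : q ≠ 1) :
    (powMonoidHom q : G →* G).range ≠ ⊤ := by
  rw [Ne, ← Subgroup.index_eq_one, IsCyclic.index_powMonoidHom_range_of_dvd hq]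
  exact hq1

theorem IsCyclic.exists_ker_eq_powMonoidHom_range [Fact q.Prime] (hq : q ∣ Nat.card G) :
    ∃ χ : G →* Multiplicative (ZMod q), χ.ker = (powMonoidHom q : G →* G).range := by
  have hcard : Nat.card (G ⧸ (powMonoidHom q : G →* G).range) = q := by
    rw [← Subgroup.index_eq_card, IsCyclic.index_powMonoidHom_range_of_dvd hq]
  let e := mulEquivOfPrimeCardEq (G' := Multiplicative (ZMod q)) hcard (Nat.card_zmod q)
  refine ⟨(e : _ →* Multiplicative (ZMod q)).comp (QuotientGroup.mk' (powMonoidHom q).range), ?_⟩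
  rw [MonoidHom.ker_mulEquiv_comp, QuotientGroup.ker_mk']

end PowerResidues

theorem Units.exists_val_pow_eq_iff_mem_range {M : Type*} [CommMonoid M] (n : ℕ) (a : Mˣ) :
    (∃ x : Mˣ, (x : M) ^ n = a) ↔ a ∈ (powMonoidHom n : Mˣ →* Mˣ).range := by
  simp only [MonoidHom.mem_range, powMonoidHom_apply, Units.ext_iff, Units.val_pow_eq_pow_val]

theorem exists_pow_eq_of_lt_leastDPowNonRes {p d n : ℕ} (hn : 0 < n)
    (h : n < leastDPowNonRes p d) : ∃ x : (ZMod p)ˣ, (x : ZMod p) ^ d = n := by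
  by_contra hx
  exact Nat.notMem_of_lt_sInf h ⟨hn, hx⟩

theorem leastDPowNonRes_spec {p d : ℕ} [Fact p.Prime] (hd : d ∣ p - 1) (hd1 : d ≠ 1) :
    0 < leastDPowNonRes p d ∧ leastDPowNonRes p d < p ∧
      ¬ ∃ x : (ZMod p)ˣ, (x : ZMod p) ^ d = leastDPowNonRes p d := by
  have hcard : Nat.card (ZMod p)ˣ = p - 1 := by
    rw [Nat.card_eq_fintype_card, ZMod.card_units]
  obtain ⟨a, -, ha⟩ := SetLike.exists_of_lt
    (IsCyclic.powMonoidHom_range_ne_top (G := (ZMod p)ˣ) (hcard ▸ hd) hd1).lt_top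
  rw [← Units.exists_val_pow_eq_iff_mem_range, ← ZMod.natCast_zmod_val (a : ZMod p)] at ha
  have hval : 0 < (a : ZMod p).val := (ZMod.val_pos).2 a.ne_zero
  have hmem : (a : ZMod p).val ∈ {n : ℕ | 0 < n ∧ ¬ ∃ x : (ZMod p)ˣ, (x : ZMod p) ^ d = n} :=
    ⟨hval, ha⟩
  obtain ⟨hpos, hnon⟩ := Nat.sInf_mem ⟨_, hmem⟩
  exact ⟨hpos, (Nat.sInf_le hmem).trans_lt (ZMod.val_lt _), hnon⟩

theorem two_le_prod_of_prime {A : Finset ℕ} (hA : ∀ q ∈ A, q.Prime) (hne : A.Nonempty) :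
    2 ≤ ∏ q ∈ A, q := by
  obtain ⟨q, hq⟩ := hne
  exact (hA q hq).two_le.trans
    (Finset.single_le_prod' (fun r hr => (hA r hr).one_lt.le) hq)

theorem exists_exponents_lt_jacobsthal {α : Type*} [LinearOrder α] (S : Finset α)
    (A : α → Finset ℕ) (v : (q : ℕ) → α → ZMod q)
    (hA : ∀ g ∈ S, ∀ q ∈ A g, q.Prime) (hA_ne : ∀ g ∈ S, (A g).Nonempty)
    (hv : ∀ g ∈ S, ∀ q ∈ A g, v q g ≠ 0)
    (hv_lt : ∀ g ∈ S, ∀ q ∈ A g, ∀ g' ∈ S, g' < g → v q g' = 0) :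
    ∃ m : α → ℕ, (∀ g ∈ S, m g < jacobsthal (∏ q ∈ A g, q)) ∧
      (∀ g ∈ S, (∀ g' ∈ S, g' ≤ g) → m g = 1) ∧
      ∀ g ∈ S, ∀ q ∈ A g, ∑ g' ∈ S, (m g' : ZMod q) * v q g' ≠ 0 := by
  induction S using Finset.induction_on_min with
  | empty => exact ⟨fun _ => 1, by simp, by simp, by simp⟩
  | insert a s ha_lt ih =>
    simp only [Finset.mem_insert, forall_eq_or_imp] at hA hA_ne hv hv_lt
    rcases s.eq_empty_or_nonempty with rfl | ⟨b, hb⟩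
    · refine ⟨fun _ => 1, ?_, by simp, ?_⟩
      · simpa using one_lt_jacobsthal (two_le_prod_of_prime hA.1 hA_ne.1)
      · simpa using hv.1
    have has : a ∉ s := fun h => (ha_lt a h).false
    obtain ⟨m', hm'_lt, hm'_max, hm'_sum⟩ := ih hA.2 hA_ne.2 hv.2
      fun g hg q hq g' hg' => (hv_lt.2 g hg q hq).2 g' hg'
    -- modulo `q ∈ A a`, the only forbidden value of `m₀` is the root of `m₀ * v q a + ∑ = 0`
    obtain ⟨m₀, hm₀_lt, hm₀⟩ := exists_lt_jacobsthal_forall_natCast_ne (A a) hA.1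
      fun q => -(∑ g ∈ s, (m' g : ZMod q) * v q g) * (v q a)⁻¹
    have hsum (q : ℕ) : ∑ g ∈ insert a s, (Function.update m' a m₀ g : ZMod q) * v q g =
        m₀ * v q a + ∑ g ∈ s, (m' g : ZMod q) * v q g := by
      rw [Finset.sum_insert has, Function.update_self]
      congr 1
      exact Finset.sum_congr rfl fun g hg => by
        rw [Function.update_of_ne (ne_of_mem_of_not_mem hg has)]
    refine ⟨Function.update m' a m₀, ?_, ?_, ?_⟩
    · simp only [Finset.mem_insert, forall_eq_or_imp, Function.update_self]
      exact ⟨hm₀_lt, fun g hg => by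
        rw [Function.update_of_ne (ne_of_mem_of_not_mem hg has)]
        exact hm'_lt g hg⟩
    · intro g hg hmax
      have hga : g ≠ a := by
        rintro rfl
        exact (ha_lt b hb).not_ge (hmax b (Finset.mem_insert_of_mem hb))
      rw [Function.update_of_ne hga]
      exact hm'_max g ((Finset.mem_insert.1 hg).resolve_left hga)
        fun g' hg' => hmax g' (Finset.mem_insert_of_mem hg')
    · intro g hg q hq
      rw [hsum q]
      rcases Finset.mem_insert.1 hg with rfl | hg
      · have := Fact.mk (hA.1 q hq)
        have hva := hv.1 q hq
        intro h
        apply hm₀ q hq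
        field_simp
        linear_combination h
      · rw [(hv_lt.2 g hg q hq).1 (ha_lt g hg), mul_zero, zero_add]
        exact hm'_sum g hg q hq

theorem mem_resClass {p g q : ℕ} :
    q ∈ resClass p g ↔ q ∈ (p - 1).primeFactors ∧ leastDPowNonRes p q = g :=
  Finset.mem_filter

theorem resClass_nonempty {p g : ℕ} (hg : g ∈ resValues p) : (resClass p g).Nonempty := by
  obtain ⟨q, hq, rfl⟩ := Finset.mem_image.1 hg
  exact ⟨q, mem_resClass.2 ⟨hq, rfl⟩⟩

section
variable {p : ℕ} [Fact p.Prime]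

theorem leastDPowNonRes_spec_of_mem_primeFactors {q : ℕ} (hq : q ∈ (p - 1).primeFactors) :
    0 < leastDPowNonRes p q ∧ leastDPowNonRes p q < p ∧
      ¬ ∃ x : (ZMod p)ˣ, (x : ZMod p) ^ q = leastDPowNonRes p q :=
  leastDPowNonRes_spec (Nat.dvd_of_mem_primeFactors hq)
    (Nat.prime_of_mem_primeFactors hq).one_lt.ne'

theorem pos_lt_of_mem_resValues {g : ℕ} (hg : g ∈ resValues p) : 0 < g ∧ g < p := by
  obtain ⟨q, hq, rfl⟩ := Finset.mem_image.1 hg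
  exact ⟨(leastDPowNonRes_spec_of_mem_primeFactors hq).1,
    (leastDPowNonRes_spec_of_mem_primeFactors hq).2.1⟩

theorem exists_units_val_eq_of_mem_resValues :
    ∃ u : ℕ → (ZMod p)ˣ, ∀ g ∈ resValues p, (u g : ZMod p) = g := by
  have (g : ℕ) (hg : g ∈ resValues p) : ∃ x : (ZMod p)ˣ, (x : ZMod p) = g := by
    obtain ⟨h0, hlt⟩ := pos_lt_of_mem_resValues hg
    have hg0 : (g : ZMod p) ≠ 0 :=
      (ZMod.natCast_eq_zero_iff g p).not.2 (Nat.not_dvd_of_pos_of_lt h0 hlt)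
    exact ⟨Units.mk0 _ hg0, rfl⟩
  choose! u hu using this
  exact ⟨u, hu⟩

theorem exists_powerResidueCharacters :
    ∃ χ : (q : ℕ) → (ZMod p)ˣ →* Multiplicative (ZMod q), ∀ q ∈ (p - 1).primeFactors,
      ∀ a : (ZMod p)ˣ, (∃ x : (ZMod p)ˣ, (x : ZMod p) ^ q = a) ↔ (χ q a).toAdd = 0 := by
  have hcard : Nat.card (ZMod p)ˣ = p - 1 := by rw [Nat.card_eq_fintype_card, ZMod.card_units]
  have (q : ℕ) (hq : q ∈ (p - 1).primeFactors) :
      ∃ χ : (ZMod p)ˣ →* Multiplicative (ZMod q), χ.ker = (powMonoidHom q).range :=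
    have := Fact.mk (Nat.prime_of_mem_primeFactors hq)
    IsCyclic.exists_ker_eq_powMonoidHom_range (hcard ▸ Nat.dvd_of_mem_primeFactors hq)
  choose! χ hχ using this
  refine ⟨χ, fun q hq a => ?_⟩
  rw [Units.exists_val_pow_eq_iff_mem_range, ← hχ q hq, MonoidHom.mem_ker, toAdd_eq_zero]

end

theorem stmt9 (p : ℕ) (hp : p.Prime) :
    ∃ m : ℕ → ℕ,
      (∀ g ∈ resValues p, m g + 1 ≤ jacobsthal (∏ q ∈ resClass p g, q)) ∧
      (∀ g ∈ resValues p, (∀ g' ∈ resValues p, g' ≤ g) → m g = 1) ∧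
      ∀ q ∈ (p - 1).primeFactors,
        ¬ ∃ x : (ZMod p)ˣ,
            (x : ZMod p) ^ q = ((∏ g ∈ resValues p, g ^ m g : ℕ) : ZMod p) := by
  have := Fact.mk hp
  obtain ⟨χ, hχ⟩ := exists_powerResidueCharacters (p := p)
  obtain ⟨u, hu⟩ := exists_units_val_eq_of_mem_resValues (p := p)
  obtain ⟨m, hm_lt, hm_max, hm_sum⟩ := exists_exponents_lt_jacobsthal (resValues p) (resClass p)
    (fun q g => (χ q (u g)).toAdd)
    (fun g _ q hq => Nat.prime_of_mem_primeFactors (mem_resClass.1 hq).1)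
    (fun g hg => resClass_nonempty hg)
    (fun g hg q hq => by
      obtain ⟨hqp, rfl⟩ := mem_resClass.1 hq
      rw [Ne, ← hχ q hqp, hu _ hg]
      exact (leastDPowNonRes_spec_of_mem_primeFactors hqp).2.2)
    (fun g hg q hq g' hg' hlt => by
      obtain ⟨hqp, rfl⟩ := mem_resClass.1 hq
      rw [← hχ q hqp, hu _ hg']
      exact exists_pow_eq_of_lt_leastDPowNonRes (pos_lt_of_mem_resValues hg').1 hlt)
  refine ⟨m, hm_lt, hm_max, fun q hq => ?_⟩
  have hprod : ((∏ g ∈ resValues p, g ^ m g : ℕ) : ZMod p) =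
      ((∏ g ∈ resValues p, u g ^ m g : (ZMod p)ˣ) : ZMod p) := by
    push_cast
    exact Finset.prod_congr rfl fun g hg => by rw [hu g hg]
  rw [hprod, hχ q hq, map_prod, toAdd_prod]
  simpa [nsmul_eq_mul] using
    hm_sum _ (Finset.mem_image_of_mem _ hq) q (mem_resClass.2 ⟨hq, rfl⟩)
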